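/- arXiv:1310.8028 — 4 statements merged into one kernel-verified Lean document; each statement's English description precedes it below -/
import Mathlib

section
/- The partial order (Sc, ≤) is well-founded, where Sc is the set of monotone non-increasing functions α from {1,2,...,ω} to {0,1,...,ω} (with ω the first infinite ordinal/cardinal) that are not identically zero and satisfy α(ω) = lim_{n→ω} α(n), ordered pointwise: α ≤ β iff α(m) ≤ β(m) for all m. That is, there is no strictly decreasing infinite sequence in Sc. -/
/-!
An element of `Sc` is determined by its finite values, by continuity at `ω`. If `β n ≤ V` with
`n, V` finite, then every `α ≤ β` is determined by finitely many `ℕ∞`-valued quantities, each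
monotone in `α`: its values at `m ≤ n` and, for each level `i ≤ V`, the length of the initial
segment `{m | i ≤ α m}` (the conjugate partition); above `n` the values are at most `V`, so these
lengths recover them. Strict descent below `β` would thus give strict descent in a finite power of
`ℕ∞`, which is well-founded. Finally, everything strictly below the constant `⊤` has a finite value.
-/

/- `Sc` is the set of functions from `{1,2,...,ω}` to `{0,1,...,ω}` (here reindexed
order-isomorphically by `ℕ∞ = ℕ ∪ {⊤}`) that are weakly decreasing, not identically
zero, and continuous at `ω` (the value at `⊤` is the infimum of the finite values),
ordered pointwise. -/
abbrev Sc : Type :=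
  {α : ℕ∞ → ℕ∞ // Antitone α ∧ (∃ m, α m ≠ 0) ∧ α ⊤ = ⨅ n : ℕ, α (n : ℕ∞)}

noncomputable def superlevelLength {β : Type*} [Preorder β] (f : ℕ → β) (b : β) : ℕ∞ :=
  ⨆ (m : ℕ) (_ : b ≤ f m), ((m + 1 : ℕ) : ℕ∞)

section superlevelLength

variable {β : Type*} [Preorder β] {f g : ℕ → β} {b : β}

theorem lt_superlevelLength_iff (hf : Antitone f) {m : ℕ} :
    (m : ℕ∞) < superlevelLength f b ↔ b ≤ f m := by
  simp only [superlevelLength, lt_iSup_iff, Nat.cast_lt, exists_prop]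
  exact ⟨fun ⟨_, hb, hm⟩ => hb.trans (hf (Nat.le_of_lt_succ hm)), fun hb => ⟨m, hb, m.lt_succ_self⟩⟩

theorem superlevelLength_mono (h : f ≤ g) : superlevelLength f b ≤ superlevelLength g b :=
  iSup₂_mono' fun m hb => ⟨m, hb.trans (h m), le_rfl⟩

end superlevelLength

namespace Sc

theorem ext_of_nat {α β : Sc} (h : ∀ n : ℕ, α.1 n = β.1 n) : α = β := by
  refine Subtype.ext (funext fun m => ?_)
  induction m using ENat.recTopCoe with
  | top => rw [α.2.2.2, β.2.2.2, iInf_congr h]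
  | coe n => exact h n

theorem exists_nat_le_of_lt {α β : Sc} (h : α < β) : ∃ n V : ℕ, α.1 n ≤ V := by
  by_contra! hα
  refine h.ne (ext_of_nat fun n => ?_)
  have htop : α.1 n = ⊤ := ENat.eq_top_iff_forall_gt.2 (hα n)
  have hle : α.1 n ≤ β.1 n := h.le n
  rw [htop, top_le_iff] at hle
  rw [htop, hle]

noncomputable def code (n V : ℕ) (α : Sc) : Fin (n + 1) ⊕ Fin (V + 1) → ℕ∞ :=
  Sum.elim (fun m => α.1 (m : ℕ)) (fun i => superlevelLength (fun m : ℕ => α.1 m) (i : ℕ))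

theorem code_mono (n V : ℕ) : Monotone (code n V) := fun _ _ h => by
  rintro (m | i)
  · exact h _
  · exact superlevelLength_mono fun m => h m

theorem le_of_code_eq {n V : ℕ} {α β : Sc} (hβ : β.1 n ≤ V) (h : code n V α = code n V β)
    (m : ℕ) : β.1 m ≤ α.1 m := by
  rcases le_or_gt m n with hm | hm
  · exact (congrFun h (.inl ⟨m, Nat.lt_succ_of_le hm⟩)).ge
  have hV : β.1 m ≤ V := (β.2.1 (Nat.cast_le.2 hm.le)).trans hβ
  lift β.1 m to ℕ using ne_top_of_le_ne_top (ENat.natCast_ne_top V) hV with i hi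
  have hlevel := congrFun h (.inr ⟨i, Nat.lt_succ_of_le (Nat.cast_le.1 hV)⟩)
  simp only [code, Sum.elim_inr] at hlevel
  rw [← lt_superlevelLength_iff fun _ _ h => α.2.1 (Nat.cast_le.2 h), hlevel,
    lt_superlevelLength_iff fun _ _ h => β.2.1 (Nat.cast_le.2 h), hi]

theorem eq_of_code_eq {n V : ℕ} {α β : Sc} (hβ : β.1 n ≤ V) (h : code n V α = code n V β) :
    α = β := by
  have hn : α.1 n = β.1 n := congrFun h (.inl (Fin.last n))
  exact ext_of_nat fun m =>
    le_antisymm (le_of_code_eq (hn ▸ hβ) h.symm m) (le_of_code_eq hβ h m)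

theorem acc_of_le_nat {n V : ℕ} (α : Sc) (hα : α.1 n ≤ V) : Acc (· < ·) α := by
  induction α using (InvImage.wf (code n V) wellFounded_lt).induction with
  | _ α ih =>
    refine ⟨α, fun β hβα => ih β ?_ ((hβα.le n).trans hα)⟩
    exact (code_mono n V hβα.le).lt_of_ne fun h => hβα.ne (eq_of_code_eq hα h)

end Sc

/-- The partial order `(Sc, ≤)` is well-founded: there is no strictly decreasing
infinite sequence in `Sc`. -/
theorem stmt0 : WellFounded ((· < ·) : Sc → Sc → Prop) := by
  refine ⟨fun α => ⟨α, fun β hβα => ?_⟩⟩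
  obtain ⟨n, V, hβ⟩ := Sc.exists_nat_le_of_lt hβα
  exact Sc.acc_of_le_nat β hβ
end

section
/- The partial order (Sc, ≤) has no infinite antichains: any infinite subset of Sc contains two distinct comparable elements. -/
/-! An antitone sequence in a well-order is constant from the index `argmin f` on, so it is
determined by the finite word `(f 0, L), …, (f N, L)` with `N = argmin f` and `L = f N` its limit.
A subword embedding of two such words (Higman's lemma) compares the limits through the first
letter and every other value through a letter at a later index, which by antitonicity is enough
for a pointwise comparison. -/

theorem List.SublistForall₂.exists_ge_rel_getElem {α : Type*} {r : α → α → Prop}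
    {l₁ l₂ : List α} (h : List.SublistForall₂ r l₁ l₂) (i : ℕ) (hi : i < l₁.length) :
    ∃ j, ∃ hj : j < l₂.length, i ≤ j ∧ r l₁[i] l₂[j] := by
  induction h generalizing i with
  | nil => simp at hi
  | cons hab _ ih =>
    cases i with
    | zero => exact ⟨0, by simp, le_rfl, hab⟩
    | succ k =>
      obtain ⟨j, hj, hkj, hr⟩ := ih k (by simpa using hi)
      exact ⟨j + 1, by simpa using hj, by omega, hr⟩
  | cons_right _ ih =>
    obtain ⟨j, hj, hij, hr⟩ := ih i hi
    exact ⟨j + 1, by simpa using hj, by omega, hr⟩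

section AntitoneSeq

variable {β : Type*} [LinearOrder β] [WellFoundedLT β]

noncomputable def stableWord (f : ℕ → β) : List (β × β) :=
  (List.range (Function.argmin f + 1)).map fun n => (f n, f (Function.argmin f))

theorem length_stableWord (f : ℕ → β) : (stableWord f).length = Function.argmin f + 1 := by
  simp [stableWord]

theorem getElem_stableWord (f : ℕ → β) (i : ℕ) (hi : i < (stableWord f).length) :
    (stableWord f)[i] = (f i, f (Function.argmin f)) := by
  simp [stableWord]

theorem le_of_sublistForall₂_stableWord {f g : ℕ → β} (hf : Antitone f) (hg : Antitone g)
    (h : List.SublistForall₂ (· ≤ ·) (stableWord f) (stableWord g)) : f ≤ g := by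
  have hlim : f (Function.argmin f) ≤ g (Function.argmin g) := by
    obtain ⟨j, hj, -, hr⟩ := h.exists_ge_rel_getElem 0 (by simp [length_stableWord])
    rw [getElem_stableWord, getElem_stableWord] at hr
    exact hr.2
  intro k
  by_cases hk : k ≤ Function.argmin f
  · obtain ⟨j, hj, hkj, hr⟩ :=
      h.exists_ge_rel_getElem k (by rw [length_stableWord]; omega)
    rw [getElem_stableWord, getElem_stableWord] at hr
    exact hr.1.trans (hg hkj)
  · calc f k ≤ f (Function.argmin f) := hf (by omega)
      _ ≤ g (Function.argmin g) := hlim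
      _ ≤ g k := Function.argmin_le g k

theorem isPWO_setOf_antitone : {f : ℕ → β | Antitone f}.IsPWO := by
  have higman := Set.PartiallyWellOrderedOn.partiallyWellOrderedOn_sublistForall₂
    (· ≤ · : β × β → β × β → Prop) (Set.isPWO_of_wellQuasiOrderedLE Set.univ)
  refine Set.partiallyWellOrderedOn_iff_exists_lt.2 fun F hF => ?_
  obtain ⟨m, n, hmn, h⟩ := higman.exists_lt (f := fun k => stableWord (F k)) (by simp)
  exact ⟨m, n, hmn, le_of_sublistForall₂_stableWord (hF m) (hF n) h⟩

end AntitoneSeq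

namespace Sc

theorem le_of_forall_natCast_le {a b : Sc} (h : ∀ k : ℕ, a.1 k ≤ b.1 k) : a ≤ b := by
  intro x
  induction x using ENat.recTopCoe with
  | top =>
    rw [a.2.2.2, b.2.2.2]
    exact iInf_mono h
  | coe k => exact h k

instance : WellQuasiOrderedLE Sc where
  wqo F := by
    obtain ⟨m, n, hmn, h⟩ := isPWO_setOf_antitone.exists_lt
      (f := fun k (i : ℕ) => (F k).1 i) fun k _ _ hij => (F k).2.1 (by exact_mod_cast hij)
    exact ⟨m, n, hmn, le_of_forall_natCast_le h⟩

end Sc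

/-- `(Sc, ≤)` has no infinite antichains: any infinite subset of `Sc` contains two
distinct comparable elements. -/
theorem stmt1 (S : Set Sc) (hS : S.Infinite) :
    ∃ a ∈ S, ∃ b ∈ S, a ≠ b ∧ (a ≤ b ∨ b ≤ a) := by
  by_contra! h
  exact hS (WellQuasiOrderedLE.finite_of_isAntichain fun a ha b hb hab => (h a ha b hb hab).1)
end

section
/- Let E ⊆ F be smooth countable Borel equivalence relations on standard Borel spaces X, and E' ⊆ F' on Y, and suppose both E and E' admit Borel transversals and the quotients X/E, Y/E' are standard Borel. If there is an injective Borel reduction from F/E to F'/E' (as equivalence relations on the quotient spaces X/E, Y/E'), then there is a (simultaneous) Borel reduction f : X → Y from E to E' and from F to F'. -/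
universe u

/-- An equivalence relation on a standard Borel space is *smooth* if there is a Borel
reduction from it to equality on some standard Borel space. -/
def IsSmoothEqvRel {X : Type u} [MeasurableSpace X] (E : Setoid X) : Prop :=
  ∃ (Z : Type u) (mZ : MeasurableSpace Z), @StandardBorelSpace Z mZ ∧
    ∃ f : X → Z, @Measurable _ _ _ mZ f ∧ ∀ x y, E.r x y ↔ f x = f y

/-!
A Borel transversal `T` of `E'` is a standard Borel space mapped bijectively and measurably
onto `Y/E'`; as `Y/E'` is countably separated, this map is a measurable embedding, so its
inverse is a Borel section `s` of the quotient map. Then `f := s ∘ g ∘ [·]_E` works: injectivity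
of `g` makes `f` a reduction of `E` to `E'`, and since `E' ⊆ F'`, the relation `F'/E'` on
classes is just `F'` on any representatives.
-/

namespace Setoid

variable {X Y : Type*}

theorem exists_measurable_section_of_transversal [MeasurableSpace Y] [StandardBorelSpace Y]
    {E : Setoid Y} [MeasurableSpace.CountablySeparated (Quotient E)]
    {T : Set Y} (hT : MeasurableSet T) (hTE : ∀ y, ∃! t, t ∈ T ∧ E.r t y) :
    ∃ s : Quotient E → Y, Measurable s ∧ ∀ q, Quotient.mk E (s q) = q := by
  have : StandardBorelSpace T := hT.standardBorel
  let m : T → Quotient E := fun t => Quotient.mk E t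
  have hm_inj : Function.Injective m := by
    rintro ⟨a, ha⟩ ⟨b, hb⟩ hab
    obtain ⟨c, -, hc⟩ := hTE b
    exact Subtype.ext ((hc a ⟨ha, Quotient.exact hab⟩).trans (hc b ⟨hb, E.refl b⟩).symm)
  have hm_surj : Function.Surjective m := by
    rintro ⟨y⟩
    obtain ⟨t, ⟨ht, hty⟩, -⟩ := hTE y
    exact ⟨⟨t, ht⟩, Quotient.sound hty⟩
  have hm_meas : Measurable m := measurable_quot_mk.comp measurable_subtype_coe
  have hm : MeasurableEmbedding m := hm_meas.measurableEmbedding hm_inj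
  refine ⟨fun q => hm.equivRange.symm ⟨q, hm_surj q⟩,
    measurable_subtype_coe.comp (hm.equivRange.symm.measurable.comp measurable_id.subtype_mk),
    fun q => ?_⟩
  have := congrArg Subtype.val (hm.equivRange.apply_symm_apply ⟨q, hm_surj q⟩)
  rwa [hm.equivRange_apply] at this

theorem rel_iff_exists_mk_eq_rel {E F : Setoid Y} (hEF : E ≤ F) (a b : Y) :
    F.r a b ↔ ∃ a' b', Quotient.mk E a' = Quotient.mk E a ∧ Quotient.mk E b' = Quotient.mk E b ∧
      F.r a' b' := by
  refine ⟨fun h => ⟨a, b, rfl, rfl, h⟩, ?_⟩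
  rintro ⟨a', b', ha, hb, h⟩
  exact F.trans (F.trans (hEF (Quotient.exact ha.symm)) h) (hEF (Quotient.exact hb))

theorem rel_iff_rel_of_mk_eq {E : Setoid X} {E' : Setoid Y} {f : X → Y}
    {g : Quotient E → Quotient E'} (hg : Function.Injective g)
    (hf : ∀ x, Quotient.mk E' (f x) = g (Quotient.mk E x)) (x y : X) :
    E.r x y ↔ E'.r (f x) (f y) :=
  calc E.r x y ↔ Quotient.mk E x = Quotient.mk E y := Quotient.eq.symm
    _ ↔ g (Quotient.mk E x) = g (Quotient.mk E y) := hg.eq_iff.symm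
    _ ↔ Quotient.mk E' (f x) = Quotient.mk E' (f y) := by rw [hf, hf]
    _ ↔ E'.r (f x) (f y) := Quotient.eq

end Setoid

theorem stmt14_general {X Y : Type u} [MeasurableSpace X]
    [MeasurableSpace Y] [StandardBorelSpace Y]
    (E F : Setoid X) (E' F' : Setoid Y)
    (hEF' : ∀ x y, E'.r x y → F'.r x y)
    (hTE' : ∃ T : Set Y, MeasurableSet T ∧ ∀ y, ∃! t, t ∈ T ∧ E'.r t y)
    (hQE' : StandardBorelSpace (Quotient E'))
    (g : Quotient E → Quotient E') (hg : Measurable g) (hginj : Function.Injective g)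
    (hgred : ∀ x y, F.r x y ↔ ∃ x' y', Quotient.mk E' x' = g (Quotient.mk E x) ∧
        Quotient.mk E' y' = g (Quotient.mk E y) ∧ F'.r x' y') :
    ∃ f : X → Y, Measurable f ∧ (∀ x y, E.r x y ↔ E'.r (f x) (f y)) ∧
      (∀ x y, F.r x y ↔ F'.r (f x) (f y)) := by
  obtain ⟨T, hT, hTE'⟩ := hTE'
  obtain ⟨s, hs, hs_mk⟩ := Setoid.exists_measurable_section_of_transversal hT hTE'
  let f : X → Y := fun x => s (g (Quotient.mk E x))
  have hf : ∀ x, Quotient.mk E' (f x) = g (Quotient.mk E x) := fun x => hs_mk _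
  refine ⟨f, hs.comp (hg.comp measurable_quot_mk), Setoid.rel_iff_rel_of_mk_eq hginj hf,
    fun x y => ?_⟩
  rw [hgred, ← hf, ← hf, Setoid.rel_iff_exists_mk_eq_rel (fun a b => hEF' a b)]

/-- Let `E ⊆ F` and `E' ⊆ F'` be smooth countable Borel equivalence relations on
standard Borel spaces `X`, `Y`, where `E`, `E'` admit Borel transversals and the
quotients `X/E`, `Y/E'` (with the quotient Borel structure) are standard Borel.
If there is an injective Borel reduction `g` from `F/E` to `F'/E'`, then there is a
simultaneous Borel reduction `f : X → Y` from `E` to `E'` and from `F` to `F'`. -/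
theorem stmt14 {X Y : Type u} [MeasurableSpace X] [StandardBorelSpace X]
    [MeasurableSpace Y] [StandardBorelSpace Y]
    (E F : Setoid X) (E' F' : Setoid Y)
    (hEF : ∀ x y, E.r x y → F.r x y) (hEF' : ∀ x y, E'.r x y → F'.r x y)
    (hEb : MeasurableSet {p : X × X | E.r p.1 p.2})
    (hFb : MeasurableSet {p : X × X | F.r p.1 p.2})
    (hE'b : MeasurableSet {p : Y × Y | E'.r p.1 p.2})
    (hF'b : MeasurableSet {p : Y × Y | F'.r p.1 p.2})
    (hEc : ∀ x, {y | E.r x y}.Countable) (hFc : ∀ x, {y | F.r x y}.Countable)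
    (hE'c : ∀ y, {z | E'.r y z}.Countable) (hF'c : ∀ y, {z | F'.r y z}.Countable)
    (hEs : IsSmoothEqvRel E) (hFs : IsSmoothEqvRel F) (hE's : IsSmoothEqvRel E') (hF's : IsSmoothEqvRel F')
    (hTE : ∃ T : Set X, MeasurableSet T ∧ ∀ x, ∃! t, t ∈ T ∧ E.r t x)
    (hTE' : ∃ T : Set Y, MeasurableSet T ∧ ∀ y, ∃! t, t ∈ T ∧ E'.r t y)
    (hQE : StandardBorelSpace (Quotient E)) (hQE' : StandardBorelSpace (Quotient E'))
    (g : Quotient E → Quotient E') (hg : Measurable g) (hginj : Function.Injective g)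
    (hgred : ∀ x y, F.r x y ↔ ∃ x' y', Quotient.mk E' x' = g (Quotient.mk E x) ∧
        Quotient.mk E' y' = g (Quotient.mk E y) ∧ F'.r x' y') :
    ∃ f : X → Y, Measurable f ∧ (∀ x y, E.r x y ↔ E'.r (f x) (f y)) ∧
      (∀ x y, F.r x y ↔ F'.r (f x) (f y)) :=
  stmt14_general E F E' F' hEF' hTE' hQE' g hg hginj hgred
end

section
/- Let X, Y be standard Borel spaces, f, g : X → Y Borel functions, and suppose there exist Borel parametrizations of the induced equivalence relations Eq(f) and Eq(g) (where x Eq(f) y ↔ f(x) = f(y)). If f and g are equivalent (there is an arbitrary bijection φ : X → X with f = g ∘ φ), then they are Borel equivalent (there is a Borel bijection φ : X → X with f = g ∘ φ). -/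
/-!
A parametrization of `Eq(f)` identifies the `f`-fibres of cardinality `m` with the slices
`{z} × Y_m` of `Z_m × Y_m`, so `f` evaluated at one representative of each class is a Borel
injection `F_m` on `Z_m` whose range is the set of values with exactly `m` preimages. An arbitrary
bijection `φ` with `f = g ∘ φ` preserves the number of preimages of every value, so `F_m` and
its analogue `G_m` for `g` are Borel embeddings with the same range and hence differ by a Borel
isomorphism `Z_m ≃ Z'_m`. Together with Borel isomorphisms `Y_m ≃ Y'_m` between standard Borel
spaces of equal cardinality, these assemble into the required Borel bijection.
-/

/-- `C⁺ = {1, 2, ..., ℵ₀, 2^ℵ₀}`, the possible cardinalities of nonempty Borel sets. -/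
def Cplus : Set Cardinal :=
  {m | m ≠ 0 ∧ (m ≤ Cardinal.aleph0 ∨ m = Cardinal.continuum)}

/-- The natural (sigma/product) measurable structure on `Σ m, Z m × W m`. -/
def sigmaProdMS (Z W : Cplus → Type) (mZ : ∀ m, MeasurableSpace (Z m))
    (mW : ∀ m, MeasurableSpace (W m)) : MeasurableSpace (Σ m : Cplus, Z m × W m) :=
  letI : ∀ m, MeasurableSpace (Z m) := mZ
  letI : ∀ m, MeasurableSpace (W m) := mW
  inferInstance

/-- A Borel parametrization of an equivalence relation `E` on a standard Borel space
`X`: a Borel bijection `φ : X → ⊔_{m ∈ C⁺} (Z m × Y m)`, where the `Z m` are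
(pairwise disjoint) standard Borel spaces, the `Y m` are standard Borel spaces with
`|Y m| = m`, and `x E y` iff `φ x` and `φ y` have the same first coordinate (in the
`Z` factor). -/
structure BorelParametrization {X : Type} [MeasurableSpace X] (E : Setoid X) where
  Z : Cplus → Type
  W : Cplus → Type
  mZ : ∀ m, MeasurableSpace (Z m)
  mW : ∀ m, MeasurableSpace (W m)
  sbZ : ∀ m, @StandardBorelSpace (Z m) (mZ m)
  sbW : ∀ m, @StandardBorelSpace (W m) (mW m)
  cardW : ∀ m : Cplus, Cardinal.mk (W m) = (m : Cardinal)
  param : X → Σ m : Cplus, Z m × W m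
  bij : Function.Bijective param
  meas : @Measurable X _ _ (sigmaProdMS Z W mZ mW) param
  eqv : ∀ x y, E.r x y ↔
    (⟨(param x).1, (param x).2.1⟩ : Σ m : Cplus, Z m) = ⟨(param y).1, (param y).2.1⟩

open Set Function MeasurableSpace Cardinal

universe u

instance : Countable Cplus := by
  have hIic : (Iic ℵ₀).Countable := by
    rw [← Iio_insert, ← range_natCast]
    exact (countable_range _).insert _
  refine (hIic.insert 𝔠).mono ?_ |>.to_subtype
  rintro m ⟨-, hm | rfl⟩
  exacts [Or.inr hm, Or.inl rfl]

section Sigma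

variable {ι : Type*} {E : ι → Type*} [∀ i, MeasurableSpace (E i)]

theorem measurableSet_sigma_iff {s : Set (Σ i, E i)} :
    MeasurableSet s ↔ ∀ i, MeasurableSet (Sigma.mk i ⁻¹' s) :=
  MeasurableSpace.measurableSet_iInf

theorem measurable_sigmaMk (i : ι) : Measurable (Sigma.mk i : E i → Σ i, E i) :=
  fun _ hs => measurableSet_sigma_iff.1 hs i

theorem measurable_sigma_iff {γ : Type*} [MeasurableSpace γ] {f : (Σ i, E i) → γ} :
    Measurable f ↔ ∀ i, Measurable fun e : E i => f ⟨i, e⟩ :=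
  ⟨fun hf i => hf.comp (measurable_sigmaMk i),
    fun h _ hs => measurableSet_sigma_iff.2 fun i => h i hs⟩

theorem MeasurableSet.image_sigmaMk (i : ι) {s : Set (E i)} (hs : MeasurableSet s) :
    MeasurableSet (Sigma.mk i '' s) := by
  refine measurableSet_sigma_iff.2 fun j => ?_
  rcases eq_or_ne j i with rfl | hji
  · rwa [sigma_mk_injective.preimage_image]
  · rw [preimage_image_sigmaMk_of_ne hji]
    exact .empty

instance [Countable ι] [∀ i, CountablySeparated (E i)] : CountablySeparated (Σ i, E i) := by
  choose S hSc hSm hSsep using fun i => exists_countable_separating (E i) MeasurableSet univ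
  -- `univ` is added to each family so that the images also separate distinct summands.
  refine countablySeparated_def.2 ⟨⋃ i, (Sigma.mk i '' ·) '' insert Set.univ (S i),
    countable_iUnion fun i => ((hSc i).insert _).image _, ?_, ?_⟩
  · simp only [mem_iUnion, mem_image]
    rintro _ ⟨i, s, hs, rfl⟩
    exact (hs.elim (· ▸ .univ) (hSm i s)).image_sigmaMk i
  · rintro ⟨i, a⟩ - ⟨j, b⟩ - h
    have hmem (s) (hs : s ∈ insert Set.univ (S i)) :
        (⟨i, a⟩ ∈ Sigma.mk i '' s ↔ ⟨j, b⟩ ∈ Sigma.mk i '' s) :=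
      h _ (mem_iUnion.2 ⟨i, mem_image_of_mem _ hs⟩)
    obtain ⟨b', -, hb'⟩ := (hmem univ (mem_insert _ _)).1 (mem_image_of_mem _ (mem_univ a))
    obtain ⟨rfl, hb⟩ := Sigma.mk.inj_iff.1 hb'
    cases hb
    congr
    refine hSsep i a trivial b' trivial fun s hs => ?_
    simpa only [sigma_mk_injective.mem_set_image] using hmem s (mem_insert_of_mem _ hs)

noncomputable def MeasurableEquiv.sigmaCongrRight {F : ι → Type*} [∀ i, MeasurableSpace (F i)]
    (e : ∀ i, E i ≃ᵐ F i) : (Σ i, E i) ≃ᵐ Σ i, F i where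
  toEquiv := .sigmaCongrRight fun i => (e i).toEquiv
  measurable_toFun := measurable_sigma_iff.2 fun i => (measurable_sigmaMk i).comp (e i).measurable
  measurable_invFun :=
    measurable_sigma_iff.2 fun i => (measurable_sigmaMk i).comp (e i).symm.measurable

@[simp]
theorem MeasurableEquiv.sigmaCongrRight_mk {F : ι → Type*} [∀ i, MeasurableSpace (F i)]
    (e : ∀ i, E i ≃ᵐ F i) (i : ι) (a : E i) :
    sigmaCongrRight e ⟨i, a⟩ = ⟨i, e i a⟩ :=
  rfl

end Sigma

noncomputable def MeasurableEquiv.ofBijective {α β : Type*} [MeasurableSpace α]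
    [StandardBorelSpace α] [MeasurableSpace β] [CountablySeparated β] {f : α → β}
    (hf : Measurable f) (hbij : Bijective f) : α ≃ᵐ β where
  toEquiv := .ofBijective f hbij
  measurable_toFun := hf
  measurable_invFun s hs := by
    rw [← Equiv.image_eq_preimage_symm]
    exact (hf.measurableEmbedding hbij.1).measurableSet_image.2 hs

namespace MeasurableEmbedding

variable {α β γ : Type*} [MeasurableSpace α] [MeasurableSpace β] [MeasurableSpace γ]
  {f : α → β} {g : γ → β}

noncomputable def equivOfRangeEq (hf : MeasurableEmbedding f) (hg : MeasurableEmbedding g)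
    (h : range f = range g) : α ≃ᵐ γ where
  toEquiv := (Equiv.ofInjective f hf.injective).trans
    ((Equiv.setCongr h).trans (Equiv.ofInjective g hg.injective).symm)
  measurable_toFun := hg.measurable_comp_iff.1 <| by
    convert hf.measurable using 1
    exact funext fun x => Equiv.apply_ofInjective_symm hg.injective _
  measurable_invFun := hf.measurable_comp_iff.1 <| by
    convert hg.measurable using 1
    exact funext fun x => Equiv.apply_ofInjective_symm hf.injective _

theorem comp_equivOfRangeEq (hf : MeasurableEmbedding f) (hg : MeasurableEmbedding g)
    (h : range f = range g) : g ∘ hf.equivOfRangeEq hg h = f :=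
  funext fun _ => Equiv.apply_ofInjective_symm hg.injective _

end MeasurableEmbedding

theorem Cardinal.mk_preimage_comp_of_bijective {α β : Type u} {γ : Type*} {φ : α → β}
    (hφ : Bijective φ) (g : β → γ) (s : Set γ) : #((g ∘ φ) ⁻¹' s) = #(g ⁻¹' s) :=
  mk_preimage_equiv (.ofBijective φ hφ) (g ⁻¹' s)

namespace BorelParametrization

variable {X : Type} [MeasurableSpace X] {E : Setoid X} (P : BorelParametrization E)

instance (m : Cplus) : MeasurableSpace (P.Z m) := P.mZ m
instance (m : Cplus) : MeasurableSpace (P.W m) := P.mW m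
instance (m : Cplus) : StandardBorelSpace (P.Z m) := P.sbZ m
instance (m : Cplus) : StandardBorelSpace (P.W m) := P.sbW m

theorem nonempty_W (m : Cplus) : Nonempty (P.W m) :=
  mk_ne_zero_iff.1 (P.cardW m ▸ m.2.1)

noncomputable def measurableEquivW {X' : Type} [MeasurableSpace X'] {E' : Setoid X'}
    (Q : BorelParametrization E') (m : Cplus) : P.W m ≃ᵐ Q.W m :=
  PolishSpace.Equiv.measurableEquiv (Cardinal.eq.1 ((P.cardW m).trans (Q.cardW m).symm)).some

variable [StandardBorelSpace X]

noncomputable def equiv : X ≃ᵐ Σ m, P.Z m × P.W m :=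
  .ofBijective P.meas P.bij

theorem rel_equiv_symm_iff (p q : Σ m, P.Z m × P.W m) :
    E.r (P.equiv.symm p) (P.equiv.symm q) ↔
      (⟨p.1, p.2.1⟩ : Σ m, P.Z m) = ⟨q.1, q.2.1⟩ := by
  have h := P.eqv (P.equiv.symm p) (P.equiv.symm q)
  rwa [show P.param = P.equiv from rfl, P.equiv.apply_symm_apply,
    P.equiv.apply_symm_apply] at h

noncomputable def rep (m : Cplus) (z : P.Z m) : X :=
  P.equiv.symm ⟨m, z, (P.nonempty_W m).some⟩

theorem measurable_rep (m : Cplus) : Measurable (P.rep m) :=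
  P.equiv.symm.measurable.comp <|
    (measurable_sigmaMk m).comp (measurable_id.prodMk measurable_const)

theorem rel_rep_iff {m : Cplus} {z z' : P.Z m} : E.r (P.rep m z) (P.rep m z') ↔ z = z' := by
  simp [rep, rel_equiv_symm_iff]

theorem rel_rep_of_equiv_symm (m : Cplus) (z : P.Z m) (w : P.W m) :
    E.r (P.equiv.symm ⟨m, z, w⟩) (P.rep m z) :=
  (P.rel_equiv_symm_iff _ _).2 rfl

theorem mk_rel_rep (m : Cplus) (z : P.Z m) : #{x // E.r x (P.rep m z)} = m := by
  have hinj : Injective fun w : P.W m => P.equiv.symm ⟨m, z, w⟩ :=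
    P.equiv.symm.injective.comp fun w w' h => by simpa using h
  have hclass : {x | E.r x (P.rep m z)} = range fun w => P.equiv.symm ⟨m, z, w⟩ := by
    ext x
    obtain ⟨⟨m', z', w'⟩, rfl⟩ := P.equiv.symm.surjective x
    simp only [rep, mem_ofPred_eq, rel_equiv_symm_iff, Sigma.mk.inj_iff, mem_range,
      P.equiv.symm.injective.eq_iff]
    constructor
    · rintro ⟨rfl, hz⟩
      exact ⟨w', rfl, by rw [eq_of_heq hz]⟩
    · rintro ⟨w, rfl, hzw⟩
      exact ⟨rfl, heq_of_eq (Prod.ext_iff.1 (eq_of_heq hzw)).1.symm⟩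
  rw [← P.cardW m, ← mk_range_eq _ hinj, ← hclass]
  rfl

section ker

variable {Y : Type} {f : X → Y} (P : BorelParametrization (Setoid.ker f))

theorem measurableEmbedding_comp_rep [MeasurableSpace Y] [StandardBorelSpace Y]
    (hf : Measurable f) (m : Cplus) :
    MeasurableEmbedding (f ∘ P.rep m) :=
  (hf.comp (P.measurable_rep m)).measurableEmbedding fun _ _ h => P.rel_rep_iff.1 h

theorem range_comp_rep (m : Cplus) :
    range (f ∘ P.rep m) = range f ∩ {y | #(f ⁻¹' {y}) = m} := by
  ext y
  constructor
  · rintro ⟨z, rfl⟩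
    exact ⟨mem_range_self _, P.mk_rel_rep m z⟩
  · rintro ⟨⟨x, rfl⟩, hx⟩
    obtain ⟨⟨m', z, w⟩, rfl⟩ := P.equiv.symm.surjective x
    have hrep : f (P.equiv.symm ⟨m', z, w⟩) = f (P.rep m' z) := P.rel_rep_of_equiv_symm m' z w
    rw [mem_ofPred_eq, hrep] at hx
    obtain rfl : m' = m := Subtype.ext ((P.mk_rel_rep m' z).symm.trans hx)
    exact ⟨z, hrep.symm⟩

end ker

end BorelParametrization

/-- If `f, g : X → Y` are Borel functions between standard Borel spaces whose induced
equivalence relations `Eq(f)`, `Eq(g)` are Borel parametrized, and if `f` and `g` are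
equivalent (via an arbitrary bijection `φ` of `X` with `f = g ∘ φ`), then they are
Borel equivalent (via a Borel bijection). -/
theorem stmt16 {X Y : Type} [MeasurableSpace X] [StandardBorelSpace X]
    [MeasurableSpace Y] [StandardBorelSpace Y]
    (f g : X → Y) (hf : Measurable f) (hg : Measurable g)
    (hpf : Nonempty (BorelParametrization (Setoid.ker f)))
    (hpg : Nonempty (BorelParametrization (Setoid.ker g)))
    (heqv : ∃ φ : X → X, Function.Bijective φ ∧ f = g ∘ φ) :
    ∃ φ : X → X, Function.Bijective φ ∧ Measurable φ ∧ f = g ∘ φ := by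
  obtain ⟨P⟩ := hpf
  obtain ⟨Q⟩ := hpg
  obtain ⟨φ, hφ, rfl⟩ := heqv
  have hrange (m : Cplus) : range ((g ∘ φ) ∘ P.rep m) = range (g ∘ Q.rep m) := by
    simp only [P.range_comp_rep, Q.range_comp_rep, hφ.2.range_comp,
      mk_preimage_comp_of_bijective hφ]
  let θ (m : Cplus) : P.Z m ≃ᵐ Q.Z m :=
    (P.measurableEmbedding_comp_rep hf m).equivOfRangeEq (Q.measurableEmbedding_comp_rep hg m)
      (hrange m)
  let ψ : X ≃ᵐ X := P.equiv.trans <|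
    (MeasurableEquiv.sigmaCongrRight fun m => (θ m).prodCongr (P.measurableEquivW Q m)).trans
      Q.equiv.symm
  refine ⟨ψ, ψ.bijective, ψ.measurable, funext fun x => ?_⟩
  obtain ⟨⟨m, z, w⟩, rfl⟩ := P.equiv.symm.surjective x
  calc g (φ (P.equiv.symm ⟨m, z, w⟩))
      = g (φ (P.rep m z)) := P.rel_rep_of_equiv_symm m z w
    _ = g (Q.rep m (θ m z)) :=
      (congrFun (MeasurableEmbedding.comp_equivOfRangeEq _ _ (hrange m)) z).symm
    _ = g (ψ (P.equiv.symm ⟨m, z, w⟩)) := by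
      simp only [ψ, MeasurableEquiv.trans_apply, MeasurableEquiv.apply_symm_apply,
        MeasurableEquiv.sigmaCongrRight_mk]
      exact (Q.rel_rep_of_equiv_symm m (θ m z) (P.measurableEquivW Q m w)).symm
end
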